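/- arXiv:1602.08444 — 6 statements merged into one kernel-verified Lean document; each statement's English description precedes it below -/
import Mathlib

section
/- The function x ↦ 1 / log(1 + 1/x) is concave on the positive reals. -/
/-!
Write `L x = log (1 + x⁻¹)`. Then `L' x = -(x (x + 1))⁻¹`, so the derivative of `1 / L` is `1 / g`
with `g x = x (x + 1) (L x)²`, and concavity amounts to `g` being increasing. Now
`g' = L · ((2x + 1) L - 2)`, which is nonnegative because `L x ≥ 2 / (2x + 1)`, the first term of
the series `log (1 + x⁻¹) = ∑ₖ 2 / (2k + 1) · (2x + 1)^(-(2k + 1))` of positive terms.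
-/

open Real Set

lemma two_div_two_mul_add_one_le_log_one_add_inv {a : ℝ} (ha : 0 < a) :
    2 / (2 * a + 1) ≤ log (1 + a⁻¹) := by
  simpa [div_eq_mul_inv] using le_hasSum (hasSum_log_one_add_inv ha) 0 fun k _ => by positivity

lemma log_one_add_inv_pos {x : ℝ} (hx : 0 < x) : 0 < log (1 + x⁻¹) :=
  log_pos (by simpa using hx)

lemma hasDerivAt_log_one_add_inv {x : ℝ} (hx : 0 < x) :
    HasDerivAt (fun x => log (1 + x⁻¹)) (-(x * (x + 1))⁻¹) x := by
  convert ((hasDerivAt_inv hx.ne').const_add 1).log (by positivity) using 1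
  field_simp

lemma hasDerivAt_mul_log_one_add_inv_sq {x : ℝ} (hx : 0 < x) :
    HasDerivAt (fun x => x * (x + 1) * log (1 + x⁻¹) ^ 2)
      (log (1 + x⁻¹) * ((2 * x + 1) * log (1 + x⁻¹) - 2)) x := by
  have h := ((hasDerivAt_id' x).fun_mul ((hasDerivAt_id' x).add_const 1)).fun_mul
    ((hasDerivAt_log_one_add_inv hx).fun_pow 2)
  refine h.congr_deriv ?_
  field_simp
  ring

lemma monotoneOn_mul_log_one_add_inv_sq :
    MonotoneOn (fun x => x * (x + 1) * log (1 + x⁻¹) ^ 2) (Ioi 0) := by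
  refine monotoneOn_of_hasDerivWithinAt_nonneg (convex_Ioi 0)
    (fun x hx => (hasDerivAt_mul_log_one_add_inv_sq hx).continuousAt.continuousWithinAt)
    (fun x hx => (hasDerivAt_mul_log_one_add_inv_sq (interior_subset hx)).hasDerivWithinAt)
    fun x hx => ?_
  rw [interior_Ioi, mem_Ioi] at hx
  have hL := two_div_two_mul_add_one_le_log_one_add_inv hx
  rw [div_le_iff₀' (by positivity)] at hL
  exact mul_nonneg (log_one_add_inv_pos hx).le (by linarith)

lemma hasDerivAt_inv_log_one_add_inv {x : ℝ} (hx : 0 < x) :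
    HasDerivAt (fun x => (log (1 + x⁻¹))⁻¹) (x * (x + 1) * log (1 + x⁻¹) ^ 2)⁻¹ x := by
  refine ((hasDerivAt_log_one_add_inv hx).inv (log_one_add_inv_pos hx).ne').congr_deriv ?_
  field_simp

/-- The function `x ↦ 1 / log (1 + 1/x)` is concave on the positive reals. -/
theorem concave_one_div_log_one_add_inv :
    ConcaveOn ℝ (Set.Ioi (0 : ℝ)) (fun x : ℝ => 1 / Real.log (1 + 1 / x)) := by
  simp only [one_div]
  have hderiv := fun x (hx : x ∈ Ioi (0 : ℝ)) => hasDerivAt_inv_log_one_add_inv hx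
  refine AntitoneOn.concaveOn_of_deriv (convex_Ioi 0)
    (fun x hx => (hderiv x hx).continuousAt.continuousWithinAt) ?_ ?_ <;> rw [interior_Ioi]
  · exact fun x hx => (hderiv x hx).differentiableAt.differentiableWithinAt
  · intro x (hx : 0 < x) y hy hxy
    rw [(hderiv x hx).deriv, (hderiv y hy).deriv]
    have := log_one_add_inv_pos hx
    exact inv_anti₀ (by positivity) (monotoneOn_mul_log_one_add_inv_sq hx hy hxy)
end

section
/- A standard interference function has at most one fixed point: if f satisfies scalability and monotonicity, and x = f(x) and y = f(y) with x, y componentwise positive, then x = y. -/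
lemma sif_le_aux {n : ℕ} (f : (Fin n → ℝ) → (Fin n → ℝ))
    (hmono : ∀ x y : Fin n → ℝ, 0 ≤ y → y ≤ x → f y ≤ f x)
    (hscal : ∀ x : Fin n → ℝ, 0 ≤ x → ∀ α : ℝ, 1 < α → ∀ i, f (α • x) i < α * f x i)
    (x y : Fin n → ℝ) (hxpos : ∀ i, 0 < x i) (hypos : ∀ i, 0 < y i)
    (hx : f x = x) (hy : f y = y) : ∀ i, y i ≤ x i := by
  intro i
  haveI : Nonempty (Fin n) := ⟨i⟩
  set α : ℝ := Finset.univ.sup' Finset.univ_nonempty (fun j => y j / x j) with hα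
  obtain ⟨j, -, hj⟩ := Finset.exists_mem_eq_sup' Finset.univ_nonempty (fun j => y j / x j)
  have hyk : ∀ k, y k ≤ α * x k := by
    intro k
    have hk : y k / x k ≤ α := by rw [hα]; exact Finset.le_sup' (fun j => y j / x j) (Finset.mem_univ k)
    calc y k = (y k / x k) * x k := (div_mul_cancel₀ _ (hxpos k).ne').symm
    _ ≤ α * x k := by nlinarith [hxpos k]
  by_cases h1 : α ≤ 1
  · calc y i ≤ α * x i := hyk i
      _ ≤ 1 * x i := by nlinarith [hxpos i]
      _ = x i := one_mul _
  · push_neg at h1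
    have hyj : y j = α * x j := by
      rw [hα, hj]; exact (div_mul_cancel₀ _ (hxpos j).ne').symm
    have hle : f y ≤ f (α • x) := by
      apply hmono
      · intro k; exact (hypos k).le
      · intro k; simpa using hyk k
    have hlt : f (α • x) j < α * f x j :=
      hscal x (fun k => (hxpos k).le) α h1 j
    rw [hx] at hlt
    have : y j < α * x j := by
      calc y j = f y j := by rw [hy]
        _ ≤ f (α • x) j := hle j
        _ < α * x j := hlt
    linarith [hyj ▸ this]

/-- Yates' uniqueness theorem: a standard interference function (monotone and scalable)
has at most one (componentwise positive) fixed point. -/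
theorem sif_fixed_point_unique {n : ℕ} (f : (Fin n → ℝ) → (Fin n → ℝ))
    (hmono : ∀ x y : Fin n → ℝ, 0 ≤ y → y ≤ x → f y ≤ f x)
    (hscal : ∀ x : Fin n → ℝ, 0 ≤ x → ∀ α : ℝ, 1 < α → ∀ i, f (α • x) i < α * f x i)
    (x y : Fin n → ℝ) (hxpos : ∀ i, 0 < x i) (hypos : ∀ i, 0 < y i)
    (hx : f x = x) (hy : f y = y) : x = y := by
  funext i
  exact le_antisymm
    (sif_le_aux f hmono hscal y x hypos hxpos hy hx i)
    (sif_le_aux f hmono hscal x y hxpos hypos hx hy i)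
end

section
/- In the load-coupling model, the per-UE load contribution y(σ²) = d / (M·B·log₂(1 + S/(I + σ²))) is a concave and increasing function of the noise-plus-interference term σ² + I, where S > 0 is the received signal power, for fixed positive constants d, M, B, S. -/
/-!
Write `L t = log (1 + S/t)`, so that the load contribution is `(d log 2 / (M B)) · L⁻¹`.
`L` is positive and strictly decreasing, which gives monotonicity. For concavity,
`(L⁻¹)'' = -S ((2t + S) L - 2S) / (t² (t + S)² L³)`, and `(2t + S) L ≥ 2S` is the
Padé bound `log (1 + x) ≥ 2x / (x + 2)` at `x = S/t`.
-/

open Real Set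

namespace Real

variable {S t : ℝ}

lemma log_one_add_div_pos (hS : 0 < S) (ht : 0 < t) : 0 < log (1 + S / t) :=
  log_pos (lt_add_of_pos_right 1 (div_pos hS ht))

lemma strictAntiOn_log_one_add_div (hS : 0 < S) :
    StrictAntiOn (fun t => log (1 + S / t)) (Ioi 0) := by
  intro t (ht : 0 < t) u (hu : 0 < u) htu
  exact log_lt_log (by positivity) (by gcongr)

lemma strictMonoOn_inv_log_one_add_div (hS : 0 < S) :
    StrictMonoOn (fun t => (log (1 + S / t))⁻¹) (Ioi 0) := fun _ ht _ hu htu =>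
  (inv_lt_inv₀ (log_one_add_div_pos hS ht) (log_one_add_div_pos hS hu)).2
    (strictAntiOn_log_one_add_div hS ht hu htu)

lemma two_mul_le_mul_log_one_add_div (hS : 0 ≤ S) (ht : 0 < t) :
    2 * S ≤ (2 * t + S) * log (1 + S / t) := by
  have hpade := le_log_one_add_of_nonneg (div_nonneg hS ht.le)
  rw [div_le_iff₀ (by positivity)] at hpade
  calc 2 * S = t * (2 * (S / t)) := by field_simp
    _ ≤ t * (log (1 + S / t) * (S / t + 2)) := by gcongr
    _ = (2 * t + S) * log (1 + S / t) := by field_simp; ring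

lemma hasDerivAt_log_one_add_div (hS : 0 ≤ S) (ht : 0 < t) :
    HasDerivAt (fun t => log (1 + S / t)) (-S / (t * (t + S))) t := by
  refine ((((hasDerivAt_inv ht.ne').const_mul S).const_add 1).log (by positivity)).congr_deriv ?_
  rw [← div_eq_mul_inv, one_add_div ht.ne']
  field_simp

lemma hasDerivAt_inv_log_one_add_div (hS : 0 < S) (ht : 0 < t) :
    HasDerivAt (fun t => (log (1 + S / t))⁻¹) (S / (t * (t + S) * log (1 + S / t) ^ 2)) t := by
  have hL := log_one_add_div_pos hS ht
  refine ((hasDerivAt_log_one_add_div hS.le ht).inv hL.ne').congr_deriv ?_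
  field_simp

lemma hasDerivAt_deriv_inv_log_one_add_div (hS : 0 < S) (ht : 0 < t) :
    HasDerivAt (fun t => S / (t * (t + S) * log (1 + S / t) ^ 2))
      (-S * ((2 * t + S) * log (1 + S / t) - 2 * S) /
        (t ^ 2 * (t + S) ^ 2 * log (1 + S / t) ^ 3)) t := by
  have hL := log_one_add_div_pos hS ht
  have hL' := hasDerivAt_log_one_add_div hS.le ht
  have hq : HasDerivAt (fun t => t * (t + S) * log (1 + S / t) ^ 2)
      ((1 * (t + S) + t * 1) * log (1 + S / t) ^ 2 +
        t * (t + S) * (2 * log (1 + S / t) * (-S / (t * (t + S))))) t :=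
    ((hasDerivAt_id' t).fun_mul ((hasDerivAt_id' t).add_const S)).fun_mul
      (by simpa using hL'.fun_pow 2)
  refine ((hasDerivAt_const t S).div hq (by positivity)).congr_deriv ?_
  field_simp
  ring

lemma concaveOn_inv_log_one_add_div (hS : 0 < S) :
    ConcaveOn ℝ (Ioi 0) (fun t => (log (1 + S / t))⁻¹) := by
  refine concaveOn_of_hasDerivWithinAt2_nonpos (convex_Ioi 0)
    (f' := fun t => S / (t * (t + S) * log (1 + S / t) ^ 2))
    (f'' := fun t => -S * ((2 * t + S) * log (1 + S / t) - 2 * S) /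
        (t ^ 2 * (t + S) ^ 2 * log (1 + S / t) ^ 3))
    (fun t ht => (hasDerivAt_inv_log_one_add_div hS ht).continuousAt.continuousWithinAt)
    (fun t ht => ?_) (fun t ht => ?_) (fun t ht => ?_) <;> rw [interior_Ioi] at ht
  · exact (hasDerivAt_inv_log_one_add_div hS ht).hasDerivWithinAt
  · exact (hasDerivAt_deriv_inv_log_one_add_div hS ht).hasDerivWithinAt
  · have ht : 0 < t := ht
    have hL := log_one_add_div_pos hS ht
    have hpade := two_mul_le_mul_log_one_add_div hS.le ht
    exact div_nonpos_of_nonpos_of_nonneg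
      (mul_nonpos_of_nonpos_of_nonneg (neg_nonpos.2 hS.le) (by linarith)) (by positivity)

end Real

/-- The per-UE load contribution `t ↦ d / (M·B·log₂(1 + S/t))`, as a function of the
noise-plus-interference power `t = σ² + I`, is concave and strictly increasing on
`(0, ∞)`, for fixed positive constants `d, M, B, S`. -/
theorem load_contribution_concave_increasing (d M B S : ℝ)
    (hd : 0 < d) (hM : 0 < M) (hB : 0 < B) (hS : 0 < S) :
    ConcaveOn ℝ (Set.Ioi (0 : ℝ))
      (fun t : ℝ => d / (M * B * Real.logb 2 (1 + S / t))) ∧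
    StrictMonoOn (fun t : ℝ => d / (M * B * Real.logb 2 (1 + S / t)))
      (Set.Ioi (0 : ℝ)) := by
  have hc : 0 < d * log 2 / (M * B) := by positivity
  have hfun : (fun t : ℝ => d / (M * B * logb 2 (1 + S / t))) =
      fun t => d * log 2 / (M * B) * (log (1 + S / t))⁻¹ := by
    funext t
    simp only [logb, div_eq_mul_inv, mul_inv, inv_inv]
    ring
  rw [hfun]
  exact ⟨(concaveOn_inv_log_one_add_div hS).smul hc.le,
    fun _ ht _ hu htu =>
      mul_lt_mul_of_pos_left (strictMonoOn_inv_log_one_add_div hS ht hu htu) hc⟩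
end

section
/- Scaling down transmit power increases load: if x is the fixed point of the load-coupling map with power p, and x' is the fixed point with power p' = p/α for α > 1, then x' ≥ x componentwise. -/
open Finset in
/-- SINR of UE `j` under load `x`, per-RU powers `p`, noise power `σ2`,
serving sets `serving`, and channel gains `g`. -/
noncomputable def sinr {n m : ℕ} (serving : Fin m → Finset (Fin n))
    (g : Fin n → Fin m → ℝ) (σ2 : ℝ) (p x : Fin n → ℝ) (j : Fin m) : ℝ :=
  (∑ i ∈ serving j, p i * g i j) /
    (∑ k ∈ (serving j)ᶜ, p k * g k j * x k + σ2)

open Finset in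
/-- Load of cell `i` given the SINR vector `γ`, demands `d`, served-UE sets `serves`,
and the product `MB` of the number of RUs and the bandwidth per RU. -/
noncomputable def load {n m : ℕ} (serves : Fin n → Finset (Fin m))
    (d : Fin m → ℝ) (MB : ℝ) (γ : Fin m → ℝ) (i : Fin n) : ℝ :=
  ∑ j ∈ serves i, d j / (MB * Real.logb 2 (1 + γ j))

/-- Bernoulli-type inequality for `logb`: `logb 2 (1+t) ≤ β * logb 2 (1 + t/β)`. -/
lemma aux_bern {t β : ℝ} (ht : 0 < t) (hβ : 1 < β) :
    Real.logb 2 (1 + t) ≤ β * Real.logb 2 (1 + t / β) := by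
  have hβ0 : 0 < β := by linarith
  have hs : (0:ℝ) < t / β := div_pos ht hβ0
  have h1 : (1:ℝ) + t ≤ (1 + t / β) ^ β := by
    have := one_add_mul_self_le_rpow_one_add (s := t / β) (by linarith) hβ.le
    rwa [mul_div_cancel₀ _ hβ0.ne'] at this
  have h2 : Real.logb 2 (1 + t) ≤ Real.logb 2 ((1 + t / β) ^ β) :=
    Real.logb_le_logb_of_le one_lt_two (by linarith) h1
  calc Real.logb 2 (1 + t) ≤ Real.logb 2 ((1 + t / β) ^ β) := h2
    _ = β * Real.logb 2 (1 + t / β) := by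
        rw [Real.logb, Real.log_rpow (by linarith), Real.logb, mul_div_assoc]

/-- Key per-term strict inequality. -/
lemma aux_key {N D D' σ2 α β MB dj : ℝ} (hN : 0 < N) (hσ : 0 < σ2) (hD : 0 ≤ D)
    (hD' : 0 ≤ D') (hDD' : D ≤ β * D') (hα : 1 < α) (hβ : 1 < β)
    (hMB : 0 < MB) (hdj : 0 < dj) :
    dj / (MB * Real.logb 2 (1 + N / (D + σ2))) <
      β * (dj / (MB * Real.logb 2 (1 + N / (D' + α * σ2)))) := by
  have hβ0 : 0 < β := by linarith
  have hγ1 : 0 < N / (D + σ2) := div_pos hN (by linarith)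
  have hγ4 : 0 < N / (D' + α * σ2) := div_pos hN (by nlinarith)
  have hL1 : 0 < Real.logb 2 (1 + N / (D + σ2)) :=
    Real.logb_pos one_lt_two (by linarith)
  have hL4 : 0 < Real.logb 2 (1 + N / (D' + α * σ2)) :=
    Real.logb_pos one_lt_two (by linarith)
  set t := N / (D' + σ2) with htdef
  have ht : 0 < t := div_pos hN (by linarith)
  -- L4 < logb 2 (1+t)
  have h1 : Real.logb 2 (1 + N / (D' + α * σ2)) < Real.logb 2 (1 + t) := by
    have : N / (D' + α * σ2) < N / (D' + σ2) :=
      div_lt_div_of_pos_left hN (by linarith) (by nlinarith)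
    exact Real.logb_lt_logb one_lt_two (by linarith) (by rw [htdef]; linarith)
  -- logb 2 (1+t) ≤ β * logb 2 (1 + t/β)
  have h2 := aux_bern ht hβ
  -- t/β ≤ N/(β*D'+σ2)
  have h3 : Real.logb 2 (1 + t / β) ≤ Real.logb 2 (1 + N / (β * D' + σ2)) := by
    have he : t / β = N / (β * D' + β * σ2) := by
      rw [htdef, div_div]; ring_nf
    have hle : N / (β * D' + β * σ2) ≤ N / (β * D' + σ2) :=
      div_le_div_of_nonneg_left hN.le (by nlinarith) (by nlinarith)
    apply Real.logb_le_logb_of_le one_lt_two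
    · have : 0 < t / β := div_pos ht hβ0
      linarith
    · rw [he]; linarith
  -- N/(β*D'+σ2) ≤ N/(D+σ2)
  have h4 : Real.logb 2 (1 + N / (β * D' + σ2)) ≤ Real.logb 2 (1 + N / (D + σ2)) := by
    have hle : N / (β * D' + σ2) ≤ N / (D + σ2) :=
      div_le_div_of_nonneg_left hN.le (by linarith) (by linarith)
    have h0 : 0 < N / (β * D' + σ2) := div_pos hN (by nlinarith)
    exact Real.logb_le_logb_of_le one_lt_two (by linarith) (by linarith)
  have hLlt : Real.logb 2 (1 + N / (D' + α * σ2)) <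
      β * Real.logb 2 (1 + N / (D + σ2)) := by nlinarith
  rw [mul_div_assoc']
  rw [div_lt_div_iff₀ (by positivity) (by positivity)]
  nlinarith [mul_lt_mul_of_pos_left hLlt (mul_pos hdj hMB)]

/-- Scaling down transmit power increases the fixed-point load: if `x` is the fixed
point of the load-coupling map with power `p`, and `x'` the fixed point with power
`p/α` for `α > 1`, then `x ≤ x'` componentwise. -/
theorem load_increases_when_power_scaled_down {n m : ℕ}
    (serving : Fin m → Finset (Fin n)) (serves : Fin n → Finset (Fin m))
    (g : Fin n → Fin m → ℝ) (d : Fin m → ℝ) (MB σ2 : ℝ)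
    (hg : ∀ i j, 0 < g i j) (hd : ∀ j, 0 < d j) (hMB : 0 < MB) (hσ2 : 0 < σ2)
    (hassoc : ∀ i j, j ∈ serves i ↔ i ∈ serving j)
    (p : Fin n → ℝ) (hp : ∀ i, 0 < p i) (α : ℝ) (hα : 1 < α)
    (x x' : Fin n → ℝ) (hxnn : 0 ≤ x) (hx'nn : 0 ≤ x')
    (hx : x = load serves d MB (sinr serving g σ2 p x))
    (hx' : x' = load serves d MB (sinr serving g σ2 (fun i => p i / α) x')) :
    x ≤ x' := by
  classical
  by_contra hcon
  obtain ⟨i₁, hi₁⟩ : ∃ i, x' i < x i := by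
    by_contra h2
    push_neg at h2
    exact hcon fun i => h2 i
  clear hcon
  have hαpos : (0:ℝ) < α := by linarith
  have hxk : ∀ k, 0 ≤ x k := fun k => hxnn k
  have hx'k : ∀ k, 0 ≤ x' k := fun k => hx'nn k
  -- cells with empty served set have zero load
  have hx0 : ∀ i, serves i = ∅ → x i = 0 := by
    intro i hi
    conv_lhs => rw [hx]
    simp [load, hi]
  have hx'0 : ∀ i, serves i = ∅ → x' i = 0 := by
    intro i hi
    conv_lhs => rw [hx']
    simp [load, hi]
  -- x' is positive on cells with nonempty served set
  have hx'pos : ∀ i, (serves i).Nonempty → 0 < x' i := by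
    intro i hne
    rw [hx']
    unfold load
    apply Finset.sum_pos _ hne
    intro j hj
    have hij : i ∈ serving j := (hassoc i j).mp hj
    have hsinr : 0 < sinr serving g σ2 (fun i => p i / α) x' j := by
      unfold sinr
      apply div_pos
      · exact Finset.sum_pos
          (fun k _ => mul_pos (div_pos (hp k) hαpos) (hg k j)) ⟨i, hij⟩
      · have : 0 ≤ ∑ k ∈ (serving j)ᶜ, p k / α * g k j * x' k :=
          Finset.sum_nonneg fun k _ => by
            have := hx'k k
            have := (hp k).le
            have := (hg k j).le
            positivity
        linarith
    have hlog : 0 < Real.logb 2 (1 + sinr serving g σ2 (fun i => p i / α) x' j) :=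
      Real.logb_pos one_lt_two (by linarith)
    exact div_pos (hd j) (mul_pos hMB hlog)
  -- get a violating index
  have hi₁ne : (serves i₁).Nonempty := by
    rcases (serves i₁).eq_empty_or_nonempty with he | hne
    · rw [hx0 i₁ he, hx'0 i₁ he] at hi₁; exact absurd hi₁ (lt_irrefl 0)
    · exact hne
  set S : Finset (Fin n) := Finset.univ.filter (fun i => (serves i).Nonempty) with hSdef
  have hi₁S : i₁ ∈ S := by simp [hSdef, hi₁ne]
  have hS : S.Nonempty := ⟨i₁, hi₁S⟩
  obtain ⟨i₀, hi₀S, hβeq⟩ := S.exists_mem_eq_sup' hS (fun i => x i / x' i)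
  have hsup : ∀ k ∈ S, x k / x' k ≤ x i₀ / x' i₀ := fun k hk =>
    hβeq ▸ Finset.le_sup' (fun i => x i / x' i) hk
  set β := x i₀ / x' i₀ with hβdef
  have hi₀ne : (serves i₀).Nonempty := by simpa [hSdef] using hi₀S
  have hx'i₀ : 0 < x' i₀ := hx'pos _ hi₀ne
  have hβ1 : 1 < β := by
    have h1 : 1 < x i₁ / x' i₁ := (one_lt_div (hx'pos _ hi₁ne)).mpr hi₁
    have h2 := hsup i₁ hi₁S
    linarith
  have hxle : ∀ k, x k ≤ β * x' k := by
    intro k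
    rcases (serves k).eq_empty_or_nonempty with he | hne
    · rw [hx0 k he, hx'0 k he]; simp
    · have hkS : k ∈ S := by simp [hSdef, hne]
      have h1 : x k / x' k ≤ β := hsup k hkS
      have h2 := hx'pos _ hne
      rw [div_le_iff₀ h2] at h1
      linarith [h1]
  have hxi₀ : x i₀ = β * x' i₀ := by
    rw [hβdef, div_mul_cancel₀ _ hx'i₀.ne']
  -- the strict inequality at i₀
  have hmain : x i₀ < β * x' i₀ := by
    conv_lhs => rw [hx]
    have hrhs : β * x' i₀ = ∑ j ∈ serves i₀,
        β * (d j / (MB * Real.logb 2 (1 + sinr serving g σ2 (fun i => p i / α) x' j))) := by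
      conv_lhs => rw [hx']
      unfold load
      rw [Finset.mul_sum]
    rw [hrhs]
    unfold load
    apply Finset.sum_lt_sum_of_nonempty hi₀ne
    intro j hj
    have hij : i₀ ∈ serving j := (hassoc _ _).mp hj
    set N := ∑ i ∈ serving j, p i * g i j with hNdef
    set D := ∑ k ∈ (serving j)ᶜ, p k * g k j * x k with hDdef
    set D' := ∑ k ∈ (serving j)ᶜ, p k * g k j * x' k with hD'def
    have hNpos : 0 < N :=
      Finset.sum_pos (fun k _ => mul_pos (hp k) (hg k j)) ⟨i₀, hij⟩
    have hDnn : 0 ≤ D := Finset.sum_nonneg fun k _ => by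
      have := hxk k; have := (hp k).le; have := (hg k j).le; positivity
    have hD'nn : 0 ≤ D' := Finset.sum_nonneg fun k _ => by
      have := hx'k k; have := (hp k).le; have := (hg k j).le; positivity
    have hDle : D ≤ β * D' := by
      rw [hD'def, Finset.mul_sum, hDdef]
      apply Finset.sum_le_sum
      intro k _
      have hpg : 0 ≤ p k * g k j := mul_pos (hp k) (hg k j) |>.le
      have := mul_le_mul_of_nonneg_left (hxle k) hpg
      nlinarith
    have hs1 : sinr serving g σ2 p x j = N / (D + σ2) := rfl
    have hs2 : sinr serving g σ2 (fun i => p i / α) x' j = N / (D' + α * σ2) := by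
      unfold sinr
      have h1 : ∑ i ∈ serving j, p i / α * g i j = N / α := by
        rw [hNdef, Finset.sum_div]
        exact Finset.sum_congr rfl fun k _ => by ring
      have h2 : ∑ k ∈ (serving j)ᶜ, p k / α * g k j * x' k = D' / α := by
        rw [hD'def, Finset.sum_div]
        exact Finset.sum_congr rfl fun k _ => by ring
      rw [h1, h2, div_div]
      congr 1
      field_simp
    rw [hs1, hs2]
    exact aux_key hNpos hσ2 hDnn hD'nn hDle hα hβ1 hMB (hd j)
  rw [← hxi₀] at hmain
  exact lt_irrefl _ hmain
end

section
/- Sufficient condition for load reduction by adding a JT link (Theorem 2): let x̃ = f∘h(x̃) be the fixed point before adding the link (c,u), and let x = f⁺∘h⁺(x) be the fixed point after. Define the mixed iteration x⁽ᵗ⁾ = f∘h⁺(x⁽ᵗ⁻¹⁾) with x⁽⁰⁾ = x̃. If there exists k ≥ 1 with f⁺_c∘h⁺(x⁽ᵏ⁾) ≤ x⁽ᵏ⁾_c, then x ≤ x̃ componentwise. -/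
open Finset

section Aux

variable {n m : ℕ}

lemma aux_denom_pos (S : Fin m → Finset (Fin n)) (g : Fin n → Fin m → ℝ)
    {σ2 : ℝ} (hσ2 : 0 < σ2) {p : Fin n → ℝ} (hp : ∀ i, 0 < p i)
    (hg : ∀ i j, 0 < g i j) {x : Fin n → ℝ} (hx : 0 ≤ x) (j : Fin m) :
    0 < ∑ k ∈ (S j)ᶜ, p k * g k j * x k + σ2 := by
  have h : 0 ≤ ∑ k ∈ (S j)ᶜ, p k * g k j * x k :=
    Finset.sum_nonneg fun k _ => mul_nonneg (mul_nonneg (hp k).le (hg k j).le) (hx k)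
  linarith

lemma aux_sinr_nonneg (S : Fin m → Finset (Fin n)) (g : Fin n → Fin m → ℝ)
    {σ2 : ℝ} (hσ2 : 0 < σ2) {p : Fin n → ℝ} (hp : ∀ i, 0 < p i)
    (hg : ∀ i j, 0 < g i j) {x : Fin n → ℝ} (hx : 0 ≤ x) (j : Fin m) :
    0 ≤ sinr S g σ2 p x j := by
  apply div_nonneg
  · exact Finset.sum_nonneg fun i _ => mul_nonneg (hp i).le (hg i j).le
  · exact (aux_denom_pos S g hσ2 hp hg hx j).le

lemma aux_sinr_pos (S : Fin m → Finset (Fin n)) (g : Fin n → Fin m → ℝ)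
    {σ2 : ℝ} (hσ2 : 0 < σ2) {p : Fin n → ℝ} (hp : ∀ i, 0 < p i)
    (hg : ∀ i j, 0 < g i j) {x : Fin n → ℝ} (hx : 0 ≤ x) {j : Fin m}
    (hne : (S j).Nonempty) : 0 < sinr S g σ2 p x j := by
  apply div_pos
  · exact Finset.sum_pos (fun i _ => mul_pos (hp i) (hg i j)) hne
  · exact aux_denom_pos S g hσ2 hp hg hx j

/-- `sinr` is antitone in the load vector. -/
lemma aux_sinr_anti (S : Fin m → Finset (Fin n)) (g : Fin n → Fin m → ℝ)
    {σ2 : ℝ} (hσ2 : 0 < σ2) {p : Fin n → ℝ} (hp : ∀ i, 0 < p i)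
    (hg : ∀ i j, 0 < g i j) {x y : Fin n → ℝ} (hx : 0 ≤ x) (hxy : x ≤ y) (j : Fin m) :
    sinr S g σ2 p y j ≤ sinr S g σ2 p x j := by
  have hy : 0 ≤ y := le_trans hx hxy
  unfold sinr
  apply div_le_div_of_nonneg_left
  · exact Finset.sum_nonneg fun i _ => mul_nonneg (hp i).le (hg i j).le
  · exact aux_denom_pos S g hσ2 hp hg hx j
  · have : ∑ k ∈ (S j)ᶜ, p k * g k j * x k ≤ ∑ k ∈ (S j)ᶜ, p k * g k j * y k :=
      Finset.sum_le_sum fun k _ =>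
        mul_le_mul_of_nonneg_left (hxy k) (mul_nonneg (hp k).le (hg k j).le)
    linarith

/-- `sinr` is monotone in the serving set. -/
lemma aux_sinr_subset (S S' : Fin m → Finset (Fin n)) (g : Fin n → Fin m → ℝ)
    {σ2 : ℝ} (hσ2 : 0 < σ2) {p : Fin n → ℝ} (hp : ∀ i, 0 < p i)
    (hg : ∀ i j, 0 < g i j) {x : Fin n → ℝ} (hx : 0 ≤ x) {j : Fin m}
    (hsub : S j ⊆ S' j) :
    sinr S g σ2 p x j ≤ sinr S' g σ2 p x j := by
  unfold sinr
  apply div_le_div₀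
  · exact Finset.sum_nonneg fun i _ => mul_nonneg (hp i).le (hg i j).le
  · exact Finset.sum_le_sum_of_subset_of_nonneg hsub
      fun i _ _ => mul_nonneg (hp i).le (hg i j).le
  · exact aux_denom_pos S' g hσ2 hp hg hx j
  · have hsub' : (S' j)ᶜ ⊆ (S j)ᶜ := Finset.compl_subset_compl.2 hsub
    have : ∑ k ∈ (S' j)ᶜ, p k * g k j * x k ≤ ∑ k ∈ (S j)ᶜ, p k * g k j * x k :=
      Finset.sum_le_sum_of_subset_of_nonneg hsub'
        fun k _ _ => mul_nonneg (mul_nonneg (hp k).le (hg k j).le) (hx k)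
    linarith

lemma aux_load_nonneg (V : Fin n → Finset (Fin m)) {d : Fin m → ℝ} {MB : ℝ}
    (hd : ∀ j, 0 < d j) (hMB : 0 < MB) {γ : Fin m → ℝ} (hγ : ∀ j, 0 ≤ γ j)
    (i : Fin n) : 0 ≤ load V d MB γ i := by
  refine Finset.sum_nonneg fun j _ => div_nonneg (hd j).le ?_
  exact mul_nonneg hMB.le (Real.logb_nonneg one_lt_two (by linarith [hγ j]))

lemma aux_load_anti (V : Fin n → Finset (Fin m)) {d : Fin m → ℝ} {MB : ℝ}
    (hd : ∀ j, 0 < d j) (hMB : 0 < MB) {γ γ' : Fin m → ℝ} (i : Fin n)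
    (hpos : ∀ j ∈ V i, 0 < γ' j) (hle : ∀ j ∈ V i, γ' j ≤ γ j) :
    load V d MB γ i ≤ load V d MB γ' i := by
  refine Finset.sum_le_sum fun j hj => ?_
  have h1 : 0 < Real.logb 2 (1 + γ' j) :=
    Real.logb_pos one_lt_two (by linarith [hpos j hj])
  have h2 : Real.logb 2 (1 + γ' j) ≤ Real.logb 2 (1 + γ j) :=
    Real.logb_le_logb_of_le one_lt_two (by linarith [hpos j hj]) (by linarith [hle j hj])
  apply div_le_div_of_nonneg_left (hd j).le (by positivity)
  exact mul_le_mul_of_nonneg_left h2 hMB.le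

lemma aux_load_pos (V : Fin n → Finset (Fin m)) {d : Fin m → ℝ} {MB : ℝ}
    (hd : ∀ j, 0 < d j) (hMB : 0 < MB) {γ : Fin m → ℝ} {i : Fin n}
    (hne : (V i).Nonempty) (hpos : ∀ j ∈ V i, 0 < γ j) :
    0 < load V d MB γ i := by
  refine Finset.sum_pos (fun j hj => ?_) hne
  have h1 : 0 < Real.logb 2 (1 + γ j) :=
    Real.logb_pos one_lt_two (by linarith [hpos j hj])
  exact div_pos (hd j) (mul_pos hMB h1)

lemma aux_load_congr {V V' : Fin n → Finset (Fin m)} (d : Fin m → ℝ) (MB : ℝ)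
    (γ : Fin m → ℝ) {i : Fin n} (h : V i = V' i) :
    load V d MB γ i = load V' d MB γ i := by
  unfold load; rw [h]

/-- Strict scalability of a single summand of `load ∘ sinr`. -/
lemma aux_scal (S : Fin m → Finset (Fin n)) (g : Fin n → Fin m → ℝ)
    {σ2 : ℝ} (hσ2 : 0 < σ2) {p : Fin n → ℝ} (hp : ∀ i, 0 < p i)
    (hg : ∀ i j, 0 < g i j) {d : Fin m → ℝ} {MB : ℝ} (hd : ∀ j, 0 < d j)
    (hMB : 0 < MB) {y : Fin n → ℝ} (hy : 0 ≤ y) {β : ℝ} (hβ : 1 < β)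
    {j : Fin m} (hne : (S j).Nonempty) :
    d j / (MB * Real.logb 2 (1 + sinr S g σ2 p (fun i => β * y i) j)) <
      β * (d j / (MB * Real.logb 2 (1 + sinr S g σ2 p y j))) := by
  have hβ0 : 0 < β := by linarith
  set N := ∑ i ∈ S j, p i * g i j with hN
  set D := ∑ k ∈ (S j)ᶜ, p k * g k j * y k with hD
  have hNpos : 0 < N := Finset.sum_pos (fun i _ => mul_pos (hp i) (hg i j)) hne
  have hDnn : 0 ≤ D :=
    Finset.sum_nonneg fun k _ => mul_nonneg (mul_nonneg (hp k).le (hg k j).le) (hy k)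
  have hs2 : sinr S g σ2 p (fun i => β * y i) j = N / (β * D + σ2) := by
    unfold sinr
    congr 1
    rw [hD, Finset.mul_sum]
    congr 1
    exact Finset.sum_congr rfl fun k _ => by ring
  have hs1 : sinr S g σ2 p y j = N / (D + σ2) := rfl
  set s1 : ℝ := N / (D + σ2) with hs1d
  have hs1pos : 0 < s1 := div_pos hNpos (by linarith)
  -- s1/β < sinr at scaled point
  have hgt : s1 / β < N / (β * D + σ2) := by
    have h1 : s1 / β = N / (β * (D + σ2)) := by
      rw [hs1d, div_div]
      ring_nf
    rw [h1]
    apply div_lt_div_of_pos_left hNpos (by positivity)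
    nlinarith
  -- Bernoulli: β * logb 2 (1 + s1/β) ≥ logb 2 (1 + s1)
  have hbern : Real.logb 2 (1 + s1) ≤ β * Real.logb 2 (1 + s1 / β) := by
    have hsb : 0 < s1 / β := div_pos hs1pos hβ0
    have h0 : 0 < 1 + s1 / β := by linarith
    have h1 : 1 + s1 ≤ (1 + s1 / β) ^ β := by
      have := one_add_mul_self_le_rpow_one_add (s := s1 / β) (by linarith) hβ.le
      calc 1 + s1 = 1 + β * (s1 / β) := by field_simp
        _ ≤ (1 + s1 / β) ^ β := this
    have h2 : Real.log (1 + s1) ≤ Real.log ((1 + s1 / β) ^ β) :=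
      Real.log_le_log (by positivity) h1
    rw [Real.log_rpow h0] at h2
    unfold Real.logb
    rw [← mul_div_assoc]
    exact div_le_div_of_nonneg_right h2 (Real.log_pos one_lt_two).le
  set L1 : ℝ := Real.logb 2 (1 + s1) with hL1
  have hL1pos : 0 < L1 := Real.logb_pos one_lt_two (by linarith)
  set L2 : ℝ := Real.logb 2 (1 + sinr S g σ2 p (fun i => β * y i) j) with hL2
  have hL2gt : L1 / β < L2 := by
    have hsb : 0 < s1 / β := div_pos hs1pos hβ0
    have hmono : Real.logb 2 (1 + s1 / β) < L2 := by
      rw [hL2, hs2]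
      apply Real.logb_lt_logb one_lt_two (by linarith)
      linarith
    have : L1 / β ≤ Real.logb 2 (1 + s1 / β) := by
      rw [div_le_iff₀ hβ0, mul_comm]
      exact hbern
    linarith
  have hL2pos : 0 < L2 := lt_trans (by positivity) hL2gt
  have key : d j / (MB * L2) < d j / (MB * (L1 / β)) := by
    apply div_lt_div_of_pos_left (hd j) (by positivity)
    have : MB * (L1 / β) < MB * L2 := by
      apply mul_lt_mul_of_pos_left hL2gt hMB
    linarith
  have heq : d j / (MB * (L1 / β)) = β * (d j / (MB * L1)) := by
    field_simp
  rw [hs1] at *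
  calc d j / (MB * L2) < d j / (MB * (L1 / β)) := key
    _ = β * (d j / (MB * L1)) := heq

end Aux

/-- Sufficient condition for load reduction by adding a JT link `(c, u)`: let `x̃` be the
fixed point before adding the link and `x` the fixed point after. If along the mixed
iteration `x⁽ᵗ⁾ = f∘h⁺(x⁽ᵗ⁻¹⁾)` started at `x⁽⁰⁾ = x̃` there is some `k ≥ 1` with
`f⁺_c∘h⁺(x⁽ᵏ⁾) ≤ x⁽ᵏ⁾_c`, then `x ≤ x̃` componentwise. -/
theorem load_reduced_by_adding_link {n m : ℕ}
    (serving : Fin m → Finset (Fin n)) (serves : Fin n → Finset (Fin m))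
    (g : Fin n → Fin m → ℝ) (d : Fin m → ℝ) (MB σ2 : ℝ)
    (hg : ∀ i j, 0 < g i j) (hd : ∀ j, 0 < d j) (hMB : 0 < MB) (hσ2 : 0 < σ2)
    (hassoc : ∀ i j, j ∈ serves i ↔ i ∈ serving j)
    (p : Fin n → ℝ) (hp : ∀ i, 0 < p i)
    (c : Fin n) (u : Fin m) (hc : c ∉ serving u)
    (serving' : Fin m → Finset (Fin n)) (serves' : Fin n → Finset (Fin m))
    (hserving' : serving' = Function.update serving u (insert c (serving u)))
    (hserves' : serves' = Function.update serves c (insert u (serves c)))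
    (xt x : Fin n → ℝ) (hxtnn : 0 ≤ xt) (hxnn : 0 ≤ x)
    (hxt : xt = load serves d MB (sinr serving g σ2 p xt))
    (hx : x = load serves' d MB (sinr serving' g σ2 p x))
    (seq : ℕ → Fin n → ℝ) (hseq0 : seq 0 = xt)
    (hseq : ∀ t : ℕ, seq (t + 1) = load serves d MB (sinr serving' g σ2 p (seq t)))
    (hk : ∃ k : ℕ, 1 ≤ k ∧
      load serves' d MB (sinr serving' g σ2 p (seq k)) c ≤ seq k c) :
    x ≤ xt := by
  obtain ⟨k, hk1, hkc⟩ := hk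
  -- structural facts about the updated serving/serves maps
  have hsub : ∀ j, serving j ⊆ serving' j := by
    intro j
    rw [hserving']
    by_cases hj : j = u
    · subst hj; rw [Function.update_self]; exact Finset.subset_insert _ _
    · rw [Function.update_of_ne hj]
  have hserves_ne : ∀ i, i ≠ c → serves' i = serves i := by
    intro i hi; rw [hserves', Function.update_of_ne hi]
  have hservesc : serves' c = insert u (serves c) := by
    rw [hserves', Function.update_self]
  have hassoc' : ∀ i j, j ∈ serves' i → i ∈ serving' j := by
    intro i j hj
    rcases eq_or_ne i c with rfl | hi
    · rw [hservesc] at hj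
      rcases Finset.mem_insert.1 hj with rfl | h
      · rw [hserving', Function.update_self]; exact Finset.mem_insert_self _ _
      · exact hsub j ((hassoc i j).1 h)
    · rw [hserves_ne i hi] at hj
      exact hsub j ((hassoc i j).1 hj)
  have hassoc'' : ∀ i j, j ∈ serves i → i ∈ serving' j :=
    fun i j hj => hsub j ((hassoc i j).1 hj)
  -- nonnegativity of the sequence
  have hseqnn : ∀ t, 0 ≤ seq t := by
    intro t
    induction t with
    | zero => rw [hseq0]; exact hxtnn
    | succ t ih =>
      rw [hseq t]
      intro i
      exact aux_load_nonneg serves hd hMB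
        (fun j => aux_sinr_nonneg serving' g hσ2 hp hg ih j) i
  -- the sequence is decreasing
  have hdec : ∀ t, seq (t + 1) ≤ seq t := by
    intro t
    induction t with
    | zero =>
      rw [hseq 0, hseq0]
      intro i
      calc load serves d MB (sinr serving' g σ2 p xt) i
          ≤ load serves d MB (sinr serving g σ2 p xt) i := by
            apply aux_load_anti serves hd hMB i
            · intro j hj
              exact aux_sinr_pos serving g hσ2 hp hg hxtnn ⟨i, (hassoc i j).1 hj⟩
            · intro j hj
              exact aux_sinr_subset serving serving' g hσ2 hp hg hxtnn (hsub j)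
        _ = xt i := (congrFun hxt i).symm
    | succ t ih =>
      intro i
      rw [hseq (t + 1)]
      calc load serves d MB (sinr serving' g σ2 p (seq (t + 1))) i
          ≤ load serves d MB (sinr serving' g σ2 p (seq t)) i := by
            apply aux_load_anti serves hd hMB i
            · intro j hj
              exact aux_sinr_pos serving' g hσ2 hp hg (hseqnn t) ⟨i, hassoc'' i j hj⟩
            · intro j hj
              exact aux_sinr_anti serving' g hσ2 hp hg (hseqnn (t + 1)) ih j
        _ = seq (t + 1) i := (congrFun (hseq t) i).symm
  have hchain : ∀ t, seq t ≤ xt := by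
    intro t
    induction t with
    | zero => rw [hseq0]
    | succ t ih => exact le_trans (hdec t) ih
  set y : Fin n → ℝ := seq k with hy
  have hynn : 0 ≤ y := hseqnn k
  -- H(y) ≤ y
  have Hy_le : ∀ i, load serves' d MB (sinr serving' g σ2 p y) i ≤ y i := by
    intro i
    by_cases hic : i = c
    · subst hic; exact hkc
    · rw [aux_load_congr d MB _ (hserves_ne i hic)]
      have := congrFun (hseq k) i
      rw [← this]
      exact hdec k i
  -- y c > 0
  have hyc : 0 < y c := by
    have h1 : 0 < load serves' d MB (sinr serving' g σ2 p y) c := by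
      apply aux_load_pos serves' hd hMB
      · rw [hservesc]; exact Finset.insert_nonempty _ _
      · intro j hj
        exact aux_sinr_pos serving' g hσ2 hp hg hynn ⟨c, hassoc' c j hj⟩
    exact lt_of_lt_of_le h1 (Hy_le c)
  -- if y i = 0 then x i = 0
  have hx0 : ∀ i, y i = 0 → x i = 0 := by
    intro i hyi
    have hic : i ≠ c := fun h => by rw [h] at hyi; exact absurd hyi hyc.ne'
    obtain ⟨k', rfl⟩ : ∃ k', k = k' + 1 :=
      ⟨k - 1, (Nat.succ_pred_eq_of_pos hk1).symm⟩
    -- serves i must be empty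
    have hse : serves i = ∅ := by
      by_contra hne
      have hne' : (serves i).Nonempty := Finset.nonempty_iff_ne_empty.2 hne
      have h1 : 0 < load serves d MB (sinr serving' g σ2 p (seq k')) i := by
        apply aux_load_pos serves hd hMB hne'
        intro j hj
        exact aux_sinr_pos serving' g hσ2 hp hg (hseqnn k') ⟨i, hassoc'' i j hj⟩
      have h2 := congrFun (hseq k') i
      rw [← h2] at h1
      exact absurd hyi h1.ne'
    have hse' : serves' i = ∅ := by rw [hserves_ne i hic, hse]
    rw [congrFun hx i, load, hse', Finset.sum_empty]
  -- maximal ratio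
  obtain ⟨i₀, -, hmax⟩ := Finset.exists_max_image Finset.univ
    (fun i => x i / y i) ⟨c, Finset.mem_univ c⟩
  set β : ℝ := x i₀ / y i₀ with hβdef
  have hβnn : 0 ≤ β := div_nonneg (hxnn i₀) (hynn i₀)
  have hxley : ∀ i, x i ≤ β * y i := by
    intro i
    have hyi : (0 : ℝ) ≤ y i := hynn i
    rcases eq_or_lt_of_le hyi with h | h
    · rw [hx0 i h.symm, ← h, mul_zero]
    · have := hmax i (Finset.mem_univ i)
      calc x i = (x i / y i) * y i := (div_mul_cancel₀ (x i) h.ne').symm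
        _ ≤ β * y i := mul_le_mul_of_nonneg_right this h.le
  by_cases hβle : β ≤ 1
  · -- easy case: x ≤ y ≤ xt
    intro i
    calc x i ≤ β * y i := hxley i
      _ ≤ 1 * y i := mul_le_mul_of_nonneg_right hβle (hynn i)
      _ = y i := one_mul _
      _ ≤ xt i := hchain k i
  · exfalso
    push_neg at hβle
    have hyi₀ : 0 < y i₀ := by
      have hyi : (0 : ℝ) ≤ y i₀ := hynn i₀
      rcases eq_or_lt_of_le hyi with h | h
      · exfalso
        rw [hβdef, ← h, div_zero] at hβle
        linarith
      · exact h
    have hxeq : x i₀ = β * y i₀ := by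
      rw [hβdef, div_mul_cancel₀ (x i₀) hyi₀.ne']
    have hxi₀ : 0 < x i₀ := by
      rw [hxeq]; positivity
    have hsne : (serves' i₀).Nonempty := by
      by_contra hne
      rw [Finset.not_nonempty_iff_eq_empty] at hne
      have : x i₀ = 0 := by rw [congrFun hx i₀, load, hne, Finset.sum_empty]
      linarith
    -- the contradiction chain
    have step1 : x i₀ ≤ load serves' d MB (sinr serving' g σ2 p (fun i => β * y i)) i₀ := by
      rw [congrFun hx i₀]
      apply aux_load_anti serves' hd hMB i₀
      · intro j hj
        exact aux_sinr_pos serving' g hσ2 hp hg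
          (fun i => mul_nonneg hβnn (hynn i)) ⟨i₀, hassoc' i₀ j hj⟩
      · intro j hj
        exact aux_sinr_anti serving' g hσ2 hp hg hxnn hxley j
    have step2 : load serves' d MB (sinr serving' g σ2 p (fun i => β * y i)) i₀ <
        β * load serves' d MB (sinr serving' g σ2 p y) i₀ := by
      unfold load
      rw [Finset.mul_sum]
      apply Finset.sum_lt_sum_of_nonempty hsne
      intro j hj
      exact aux_scal serving' g hσ2 hp hg hd hMB hynn hβle ⟨i₀, hassoc' i₀ j hj⟩
    have step3 : β * load serves' d MB (sinr serving' g σ2 p y) i₀ ≤ β * y i₀ :=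
      mul_le_mul_of_nonneg_left (Hy_le i₀) hβnn
    rw [hxeq] at step1
    linarith
end

section
/- If demand decreases componentwise, the fixed-point load decreases componentwise: if d ≥ d' ≥ 0 (componentwise, d' positive) and x, x' are the unique fixed points of the load-coupling equation with demands d and d' respectively (same power and association), then x ≥ x' componentwise. -/
private lemma key_log (A B σ t : ℝ) (hA : 0 < A) (hB : 0 ≤ B) (hσ : 0 < σ) (ht : 1 < t) :
    Real.log (1 + A / (B + σ)) < t * Real.log (1 + A / (t * B + σ)) := by
  have ht0 : (0:ℝ) < t := lt_trans one_pos ht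
  have hu : 0 < B + σ := by linarith
  have htu : 0 < t * (B + σ) := by positivity
  have hden : 0 < t * B + σ := by positivity
  have hlt : t * B + σ < t * (B + σ) := by nlinarith
  have hfrac : A / (t * (B + σ)) < A / (t * B + σ) :=
    div_lt_div_of_pos_left hA hden hlt
  have h1 : (0:ℝ) < 1 + A / (t * (B + σ)) := by positivity
  have hbern : 1 + A / (B + σ) ≤ (1 + A / (t * (B + σ))) ^ t := by
    have := one_add_mul_self_le_rpow_one_add (s := A / (t * (B + σ)))
      (le_of_lt (lt_of_lt_of_le neg_one_lt_zero (by positivity))) (le_of_lt ht)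
    have heq : t * (A / (t * (B + σ))) = A / (B + σ) := by
      field_simp
    rwa [heq] at this
  calc Real.log (1 + A / (B + σ)) ≤ Real.log ((1 + A / (t * (B + σ))) ^ t) :=
        Real.log_le_log (by positivity) hbern
    _ = t * Real.log (1 + A / (t * (B + σ))) := Real.log_rpow h1 t
    _ < t * Real.log (1 + A / (t * B + σ)) := by
        apply mul_lt_mul_of_pos_left _ ht0
        exact Real.log_lt_log (by positivity) (by linarith)

private lemma term_lt (A B B' σ MB dj dj' t : ℝ) (hA : 0 < A) (hB : 0 ≤ B) (hB' : 0 ≤ B')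
    (hBB' : B' ≤ t * B) (hσ : 0 < σ) (hMB : 0 < MB) (hdj' : 0 < dj') (hdd : dj' ≤ dj)
    (ht : 1 < t) :
    dj' / (MB * Real.logb 2 (1 + A / (B' + σ))) <
      t * (dj / (MB * Real.logb 2 (1 + A / (B + σ)))) := by
  have ht0 : (0:ℝ) < t := lt_trans one_pos ht
  have hlog2 : (0:ℝ) < Real.log 2 := Real.log_pos one_lt_two
  have ha : 0 < A / (B + σ) := by positivity
  have ha' : 0 < A / (B' + σ) := by positivity
  have hL : 0 < Real.log (1 + A / (B + σ)) := Real.log_pos (by linarith)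
  have hL' : 0 < Real.log (1 + A / (B' + σ)) := Real.log_pos (by linarith)
  have hkey : Real.log (1 + A / (B + σ)) < t * Real.log (1 + A / (B' + σ)) := by
    calc Real.log (1 + A / (B + σ)) < t * Real.log (1 + A / (t * B + σ)) :=
          key_log A B σ t hA hB hσ ht
      _ ≤ t * Real.log (1 + A / (B' + σ)) := by
          apply mul_le_mul_of_nonneg_left _ (le_of_lt ht0)
          apply Real.log_le_log (by positivity)
          have : A / (t * B + σ) ≤ A / (B' + σ) :=
            div_le_div_of_nonneg_left (le_of_lt hA) (by linarith) (by linarith)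
          linarith
  rw [Real.logb, Real.logb]
  have hX : 0 < MB * (Real.log (1 + A / (B + σ)) / Real.log 2) := by positivity
  have hX' : 0 < MB * (Real.log (1 + A / (B' + σ)) / Real.log 2) := by positivity
  conv_rhs => rw [← mul_div_assoc]
  rw [div_lt_div_iff₀ hX' hX]
  have main : dj' * (MB * Real.log (1 + A / (B + σ))) <
      t * dj * (MB * Real.log (1 + A / (B' + σ))) := by
    have h1 := mul_lt_mul_of_pos_left hkey (mul_pos hdj' hMB)
    have h2 := mul_le_mul_of_nonneg_right hdd
      (le_of_lt (mul_pos (mul_pos ht0 hMB) hL'))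
    nlinarith
  calc dj' * (MB * (Real.log (1 + A / (B + σ)) / Real.log 2))
      = (dj' * (MB * Real.log (1 + A / (B + σ)))) / Real.log 2 := by ring
    _ < (t * dj * (MB * Real.log (1 + A / (B' + σ)))) / Real.log 2 := by
        gcongr
    _ = t * dj * (MB * (Real.log (1 + A / (B' + σ)) / Real.log 2)) := by ring

/-- If the demand decreases componentwise, the fixed-point load decreases componentwise:
for demands `d ≥ d' > 0` (same power and association), the corresponding fixed points
satisfy `x' ≤ x`. -/
theorem load_antitone_in_demand {n m : ℕ}
    (serving : Fin m → Finset (Fin n)) (serves : Fin n → Finset (Fin m))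
    (g : Fin n → Fin m → ℝ) (MB σ2 : ℝ)
    (hg : ∀ i j, 0 < g i j) (hMB : 0 < MB) (hσ2 : 0 < σ2)
    (hassoc : ∀ i j, j ∈ serves i ↔ i ∈ serving j)
    (p : Fin n → ℝ) (hp : ∀ i, 0 < p i)
    (d d' : Fin m → ℝ) (hd' : ∀ j, 0 < d' j) (hdd' : ∀ j, d' j ≤ d j)
    (x x' : Fin n → ℝ) (hxnn : 0 ≤ x) (hx'nn : 0 ≤ x')
    (hx : x = load serves d MB (sinr serving g σ2 p x))
    (hx' : x' = load serves d' MB (sinr serving g σ2 p x')) :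
    x' ≤ x := by
  classical
  have hxnn' : ∀ i, 0 ≤ x i := fun i => by simpa using hxnn i
  have hx'nn' : ∀ i, 0 ≤ x' i := fun i => by simpa using hx'nn i
  have hA : ∀ j : Fin m, (serving j).Nonempty → 0 < ∑ i ∈ serving j, p i * g i j := by
    intro j hj
    exact Finset.sum_pos (fun i _ => mul_pos (hp i) (hg i j)) hj
  have hBnn : ∀ (y : Fin n → ℝ), (∀ i, 0 ≤ y i) → ∀ j : Fin m,
      0 ≤ ∑ k ∈ (serving j)ᶜ, p k * g k j * y k := by
    intro y hy j
    exact Finset.sum_nonneg fun k _ => mul_nonneg (mul_nonneg (hp k).le (hg k j).le) (hy k)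
  have hsinr : ∀ (y : Fin n → ℝ), (∀ i, 0 ≤ y i) → ∀ j : Fin m, (serving j).Nonempty →
      0 < sinr serving g σ2 p y j := by
    intro y hy j hj
    unfold sinr
    exact div_pos (hA j hj) (by have := hBnn y hy j; linarith)
  have hload : ∀ (e : Fin m → ℝ), (∀ j, 0 < e j) → ∀ (y : Fin n → ℝ), (∀ i, 0 ≤ y i) →
      ∀ i : Fin n, (serves i).Nonempty → 0 < load serves e MB (sinr serving g σ2 p y) i := by
    intro e he y hy i hi
    unfold load
    apply Finset.sum_pos _ hi
    intro j hj
    have hjs : (serving j).Nonempty := ⟨i, (hassoc i j).mp hj⟩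
    have hγ := hsinr y hy j hjs
    have hlb : 0 < Real.logb 2 (1 + sinr serving g σ2 p y j) :=
      Real.logb_pos one_lt_two (by linarith)
    exact div_pos (he j) (mul_pos hMB hlb)
  have hxpos : ∀ i, (serves i).Nonempty → 0 < x i := by
    intro i hi; rw [hx]
    exact hload d (fun j => lt_of_lt_of_le (hd' j) (hdd' j)) x hxnn' i hi
  have hempty : ∀ i, ¬ (serves i).Nonempty → x i = 0 ∧ x' i = 0 := by
    intro i hi
    rw [Finset.not_nonempty_iff_eq_empty] at hi
    constructor
    · rw [hx]; unfold load; rw [hi, Finset.sum_empty]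
    · rw [hx']; unfold load; rw [hi, Finset.sum_empty]
  by_contra hcon
  simp only [Pi.le_def, not_forall, not_le] at hcon
  obtain ⟨i₁, hi₁⟩ := hcon
  have hne : (Finset.univ : Finset (Fin n)).Nonempty := ⟨i₁, Finset.mem_univ _⟩
  set t := Finset.univ.sup' hne (fun i => x' i / x i) with htdef
  obtain ⟨i₀, -, hi₀⟩ := Finset.exists_mem_eq_sup' hne (fun i => x' i / x i)
  rw [← htdef] at hi₀
  have hle : ∀ i : Fin n, x' i / x i ≤ t := by
    intro i
    have := Finset.le_sup' (fun i => x' i / x i) (Finset.mem_univ i)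
    simpa [← htdef] using this
  have hx1pos : 0 < x i₁ := by
    by_contra h
    have hx1 : x i₁ = 0 := le_antisymm (not_lt.mp h) (hxnn' i₁)
    have hne' : ¬ (serves i₁).Nonempty := fun hne' => (lt_irrefl 0 (hx1 ▸ hxpos i₁ hne'))
    have := (hempty i₁ hne').2
    rw [hx1, this] at hi₁; exact lt_irrefl 0 hi₁
  have ht1 : 1 < t := lt_of_lt_of_le ((one_lt_div hx1pos).mpr hi₁) (hle i₁)
  have ht0 : 0 < t := lt_trans one_pos ht1
  have hx0pos : 0 < x i₀ := by
    by_contra h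
    have hx0 : x i₀ = 0 := le_antisymm (not_lt.mp h) (hxnn' i₀)
    rw [hx0, div_zero] at hi₀
    linarith
  have hserves0 : (serves i₀).Nonempty := by
    by_contra h
    exact absurd ((hempty i₀ h).1) (ne_of_gt hx0pos)
  have hti₀ : x' i₀ = t * x i₀ := by
    rw [hi₀, div_mul_cancel₀ _ (ne_of_gt hx0pos)]
  have hbound : ∀ i, x' i ≤ t * x i := by
    intro i
    rcases eq_or_lt_of_le (hxnn' i) with h | h
    · have hxi : x i = 0 := h.symm
      have hne' : ¬ (serves i).Nonempty := fun hs => by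
        have := hxpos i hs; rw [hxi] at this; exact lt_irrefl 0 this
      rw [(hempty i hne').2, hxi, mul_zero]
    · have := hle i
      rw [div_le_iff₀ h] at this
      linarith
  have hstrict : x' i₀ < t * x i₀ := by
    conv_lhs => rw [hx']
    conv_rhs => rw [hx]
    unfold load
    rw [Finset.mul_sum]
    apply Finset.sum_lt_sum_of_nonempty hserves0
    intro j hj
    have hjs : (serving j).Nonempty := ⟨i₀, (hassoc i₀ j).mp hj⟩
    have hAj := hA j hjs
    have hBj := hBnn x hxnn' j
    have hBj' := hBnn x' hx'nn' j
    have hBB' : (∑ k ∈ (serving j)ᶜ, p k * g k j * x' k) ≤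
        t * ∑ k ∈ (serving j)ᶜ, p k * g k j * x k := by
      rw [Finset.mul_sum]
      apply Finset.sum_le_sum
      intro k _
      have hbk := hbound k
      have hpg : 0 ≤ p k * g k j := mul_nonneg (hp k).le (hg k j).le
      calc p k * g k j * x' k ≤ p k * g k j * (t * x k) :=
            mul_le_mul_of_nonneg_left hbk hpg
        _ = t * (p k * g k j * x k) := by ring
    unfold sinr
    exact term_lt _ _ _ _ _ _ _ _ hAj hBj hBj' hBB' hσ2 hMB (hd' j) (hdd' j) ht1
  rw [hti₀] at hstrict
  exact lt_irrefl _ hstrict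
end
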